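/- Let α, β, δ, γ be linear maps on real sequences such that the matrix operator T(ω,x) = (αω + βx, δω + γx) is bounded on Z₂. Then α is bounded from ℓ² to ℓ_f*: there is a constant C′ > 0 such that for every y ∈ ℓ², αy ∈ ℓ_f* and ‖αy‖_{ℓ_f*} ≤ C′‖y‖₂. -/

import Mathlib

open scoped BigOperators

noncomputable section

/-- Real sequences. -/
abbrev RSeq : Type := ℕ → ℝ

/-- Membership in ℓ². -/
def memL2 (x : RSeq) : Prop := Summable (fun n => (x n) ^ 2)

/-- The ℓ² norm. -/
noncomputable def l2norm (x : RSeq) : ℝ := Real.sqrt (∑' n, (x n) ^ 2)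

/-- The Kalton–Peck map, defined coordinatewise.  (In Lean, `Real.log 0 = 0` and
division by zero is zero, so the conventions `0·log 0 = 0` and `KP 0 = 0` hold.) -/
noncomputable def KP (x : RSeq) : RSeq := fun n => 2 * x n * Real.log (|x n| / l2norm x)

/-- Membership in the Kalton–Peck space Z₂. -/
def memZ2 (u : RSeq × RSeq) : Prop := memL2 u.2 ∧ memL2 (u.1 - KP u.2)

/-- The Z₂ quasinorm. -/
noncomputable def Z2norm (u : RSeq × RSeq) : ℝ := l2norm (u.1 - KP u.2) + l2norm u.2

/-- A map on pairs of sequences is bounded on Z₂. -/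
def BoundedOnZ2 (T : RSeq × RSeq → RSeq × RSeq) : Prop :=
  (∀ u, memZ2 u → memZ2 (T u)) ∧ ∃ C : ℝ, ∀ u, memZ2 u → Z2norm (T u) ≤ C * Z2norm u

/-- The matrix operator associated to four linear maps on sequences. -/
def matOp (α β δ γ : RSeq →ₗ[ℝ] RSeq) : RSeq × RSeq → RSeq × RSeq :=
  fun u => (α u.1 + β u.2, δ u.1 + γ u.2)

/-- Membership in the Orlicz space ℓ_f = Dom KP. -/
def memLf (x : RSeq) : Prop := memL2 x ∧ memL2 (KP x)

/-- The ℓ_f quasinorm. -/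
noncomputable def lfNorm (x : RSeq) : ℝ := l2norm (KP x) + l2norm x

/-- Membership in ℓ_f* = Ran KP. -/
def memLfStar (ω : RSeq) : Prop := ∃ x : RSeq, memL2 x ∧ memL2 (ω - KP x)

/-- The ℓ_f* quasinorm. -/
noncomputable def lfStarNorm (ω : RSeq) : ℝ :=
  sInf {r : ℝ | ∃ x : RSeq, memL2 x ∧ memL2 (ω - KP x) ∧ r = l2norm (ω - KP x) + l2norm x}

/-- A bounded map on Z₂ is strictly singular if every linear subspace of Z₂ on which it is
bounded below is finite dimensional. -/
def StrictlySingular (T : RSeq × RSeq → RSeq × RSeq) : Prop :=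
  ∀ V : Submodule ℝ (RSeq × RSeq), (∀ v ∈ V, memZ2 v) →
    (∃ c > 0, ∀ v ∈ V, c * Z2norm v ≤ Z2norm (T v)) → FiniteDimensional ℝ V

/-- A set of sequences is totally bounded (relatively compact) for the ℓ² norm. -/
def l2TotallyBounded (A : Set RSeq) : Prop :=
  ∀ ε > 0, ∃ S : Set RSeq, S.Finite ∧
    ∀ a ∈ A, ∃ s ∈ S, memL2 (a - s) ∧ l2norm (a - s) < ε

/-- A map on Z₂ is compact if the image of the unit ball is totally bounded for the
Z₂ quasinorm. -/
def CompactOnZ2 (T : RSeq × RSeq → RSeq × RSeq) : Prop :=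
  ∀ ε > 0, ∃ S : Set (RSeq × RSeq), S.Finite ∧
    ∀ u, memZ2 u → Z2norm u ≤ 1 → ∃ s ∈ S, memZ2 (T u - s) ∧ Z2norm (T u - s) < ε

/-! Embed ℓ² into Z₂ by `y ↦ (y, 0)`, an isometry since `KP 0 = 0`. Then `T (y, 0) = (α y, δ y)`
lies in Z₂, so `δ y` witnesses `α y ∈ Ran KP`, and the ℓ_f* quasinorm of `α y` is at most
`‖T (y, 0)‖_{Z₂} ≤ C ‖y‖₂`. -/

theorem l2norm_nonneg (x : RSeq) : 0 ≤ l2norm x :=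
  Real.sqrt_nonneg _

@[simp]
theorem l2norm_zero : l2norm 0 = 0 := by
  simp [l2norm]

@[simp]
theorem KP_zero : KP 0 = 0 := by
  funext n
  simp [KP]

theorem memZ2_pair_zero {y : RSeq} (hy : memL2 y) : memZ2 (y, 0) :=
  ⟨by simp [memL2], by simpa using hy⟩

@[simp]
theorem Z2norm_pair_zero (y : RSeq) : Z2norm (y, 0) = l2norm y := by
  simp [Z2norm]

@[simp]
theorem matOp_pair_zero (α β δ γ : RSeq →ₗ[ℝ] RSeq) (y : RSeq) :
    matOp α β δ γ (y, 0) = (α y, δ y) := by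
  simp [matOp]

theorem memLfStar_of_memZ2 {ω x : RSeq} (h : memZ2 (ω, x)) : memLfStar ω :=
  ⟨x, h.1, h.2⟩

theorem lfStarNorm_le_Z2norm {ω x : RSeq} (h : memZ2 (ω, x)) : lfStarNorm ω ≤ Z2norm (ω, x) := by
  refine csInf_le ⟨0, ?_⟩ ⟨x, h.1, h.2, rfl⟩
  rintro r ⟨x, -, -, rfl⟩
  exact add_nonneg (l2norm_nonneg _) (l2norm_nonneg _)

/-- If the matrix operator is bounded on Z₂, then α is bounded from ℓ² to ℓ_f*. -/
theorem stmt_3 (α β δ γ : RSeq →ₗ[ℝ] RSeq)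
    (hT : BoundedOnZ2 (matOp α β δ γ)) :
    ∃ C > (0 : ℝ), ∀ y : RSeq, memL2 y →
      memLfStar (α y) ∧ lfStarNorm (α y) ≤ C * l2norm y := by
  obtain ⟨hmaps, C, hC⟩ := hT
  refine ⟨max C 1, lt_max_of_lt_right one_pos, fun y hy => ?_⟩
  have hu := memZ2_pair_zero hy
  have hTu : memZ2 (α y, δ y) := by simpa only [matOp_pair_zero] using hmaps _ hu
  have hbound : Z2norm (α y, δ y) ≤ C * l2norm y := by
    simpa only [matOp_pair_zero, Z2norm_pair_zero] using hC _ hu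
  refine ⟨memLfStar_of_memZ2 hTu, ?_⟩
  calc lfStarNorm (α y) ≤ Z2norm (α y, δ y) := lfStarNorm_le_Z2norm hTu
    _ ≤ C * l2norm y := hbound
    _ ≤ max C 1 * l2norm y := mul_le_mul_of_nonneg_right (le_max_left C 1) (l2norm_nonneg y)
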